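/- arXiv:1206.3565 — 4 statements merged into one kernel-verified Lean document; each statement's English description precedes it below -/
import Mathlib

section
/- The function f(t) = ∑_{n=0}^∞ f_n(t), where f₀(t) = a and f_{n+1}(t) = -∫₀ᵗ ∫₀^{τ} ω²(s) f_n(s) ds dτ with ω² continuous and bounded on ℝ, is twice differentiable and satisfies f''(t) + ω²(t) f(t) = 0 with f(0) = a and f'(0) = 0. -/
/-!
If `|ω²| ≤ K²`, induction gives `|fₙ(s)| ≤ |a| (K|s|)²ⁿ / (2n)!`, the terms of the cosh series,
so the series converges locally uniformly and dominated convergence lets the sum pass through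
both integrals. Hence `F(s) = a - ∫₀ˢ ∫₀^τ ω² F`, the integral form of the initial value problem,
and two applications of the fundamental theorem of calculus give the equation and initial data.
-/

open intervalIntegral MeasureTheory Nat

noncomputable section

def codIterate (ω : ℝ → ℝ) (a : ℝ) : ℕ → ℝ → ℝ
  | 0 => fun _ => a
  | n + 1 => fun s => -∫ τ in (0 : ℝ)..s, ∫ u in (0 : ℝ)..τ, ω u * codIterate ω a n u

def codSeries (ω : ℝ → ℝ) (a t : ℝ) : ℝ :=
  ∑' n, codIterate ω a n t

lemma abs_integral_abs_pow (m : ℕ) (s : ℝ) :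
    |∫ u in (0 : ℝ)..s, |u| ^ m| = |s| ^ (m + 1) / (m + 1) := by
  have hI : ∫ u in Set.uIoc (0 : ℝ) s, |u| ^ m = |s| ^ (m + 1) / (m + 1) := by
    simpa using integral_pow_abs_sub_uIoc (a := (0 : ℝ)) (b := s) (n := m)
  rw [← Real.norm_eq_abs, norm_integral_eq_norm_integral_uIoc, hI, Real.norm_eq_abs,
    abs_of_nonneg (by positivity)]

lemma abs_integral_le_of_abs_le_pow_div_factorial {g : ℝ → ℝ} {c : ℝ} {m : ℕ}
    (hg : ∀ u, |g u| ≤ c * |u| ^ m / m !) (s : ℝ) :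
    |∫ u in (0 : ℝ)..s, g u| ≤ c * |s| ^ (m + 1) / (m + 1)! := by
  have hc : 0 ≤ c := by
    have h1 := mul_nonneg ((abs_nonneg _).trans (hg 1)) (Nat.cast_nonneg (α := ℝ) m !)
    rwa [abs_one, one_pow, mul_one, div_mul_cancel₀ _ (by positivity)] at h1
  calc |∫ u in (0 : ℝ)..s, g u|
      ≤ |∫ u in (0 : ℝ)..s, c / m ! * |u| ^ m| := by
        rw [← Real.norm_eq_abs (∫ u in (0 : ℝ)..s, g u)]
        refine norm_integral_le_abs_of_norm_le (.of_forall fun u => ?_)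
          ((by fun_prop : Continuous fun u : ℝ => c / m ! * |u| ^ m).intervalIntegrable _ _)
        exact (hg u).trans_eq (by ring)
    _ = c * |s| ^ (m + 1) / (m + 1)! := by
        rw [intervalIntegral.integral_const_mul, abs_mul, abs_integral_abs_pow,
          abs_of_nonneg (by positivity), factorial_succ]
        push_cast
        field_simp

lemma hasSum_integral_of_abs_le {g : ℕ → ℝ → ℝ} {G : ℝ → ℝ} {b : ℕ → ℝ} {s : ℝ}
    (hg : ∀ n, Continuous (g n)) (hb : Summable b) (hgb : ∀ n u, |u| ≤ |s| → |g n u| ≤ b n)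
    (hG : ∀ u, HasSum (fun n => g n u) (G u)) :
    HasSum (fun n => ∫ u in (0 : ℝ)..s, g n u) (∫ u in (0 : ℝ)..s, G u) :=
  intervalIntegral.hasSum_integral_of_dominated_convergence (fun n _ => b n)
    (fun n => (hg n).aestronglyMeasurable)
    (fun n => .of_forall fun u hu =>
      hgb n u (by simpa using Set.abs_sub_left_of_mem_uIcc (Set.uIoc_subset_uIcc hu)))
    (.of_forall fun _ _ => hb) intervalIntegrable_const (.of_forall fun u _ => hG u)

lemma hasDerivAt_of_eq_sub_integral_integral {ω F : ℝ → ℝ} {a : ℝ} (hω : Continuous ω)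
    (hF : Continuous F) (hfix : ∀ s, F s = a - ∫ τ in (0 : ℝ)..s, ∫ u in (0 : ℝ)..τ, ω u * F u)
    (t : ℝ) : HasDerivAt F (-∫ u in (0 : ℝ)..t, ω u * F u) t := by
  have hP : Continuous fun τ => ∫ u in (0 : ℝ)..τ, ω u * F u :=
    continuous_primitive (fun _ _ => (hω.mul hF).intervalIntegrable _ _) 0
  exact ((hP.integral_hasStrictDerivAt 0 t).hasDerivAt.const_sub a).congr_of_eventuallyEq
    (.of_forall hfix)

section COD

variable {ω : ℝ → ℝ} {a K : ℝ}

lemma abs_integral_mul_le {g : ℝ → ℝ} {c : ℝ} {m : ℕ} (hK : ∀ u, |ω u| ≤ K ^ 2)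
    (hg : ∀ u, |g u| ≤ c * |u| ^ m / m !) (τ : ℝ) :
    |∫ u in (0 : ℝ)..τ, ω u * g u| ≤ c * K ^ 2 * |τ| ^ (m + 1) / (m + 1)! := by
  refine abs_integral_le_of_abs_le_pow_div_factorial (fun u => ?_) τ
  rw [abs_mul, mul_comm]
  calc |g u| * |ω u| ≤ c * |u| ^ m / m ! * K ^ 2 :=
        mul_le_mul (hg u) (hK u) (abs_nonneg _) ((abs_nonneg _).trans (hg u))
    _ = c * K ^ 2 * |u| ^ m / m ! := by ring

lemma continuous_codIterate (hω : Continuous ω) (n : ℕ) : Continuous (codIterate ω a n) := by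
  induction n with
  | zero => exact continuous_const
  | succ n ih =>
    have hinner : Continuous fun τ => ∫ u in (0 : ℝ)..τ, ω u * codIterate ω a n u :=
      continuous_primitive (fun _ _ => (hω.mul ih).intervalIntegrable _ _) 0
    exact (continuous_primitive (fun _ _ => hinner.intervalIntegrable _ _) 0).neg

lemma abs_codIterate_le (hK : ∀ u, |ω u| ≤ K ^ 2) (n : ℕ) (s : ℝ) :
    |codIterate ω a n s| ≤ |a| * (K ^ 2) ^ n * |s| ^ (2 * n) / (2 * n)! := by
  induction n generalizing s with
  | zero => simp [codIterate]
  | succ n ih =>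
    have h := abs_integral_le_of_abs_le_pow_div_factorial (abs_integral_mul_le hK ih) s
    rw [codIterate, abs_neg]
    convert h using 2 <;> ring_nf

lemma summable_codIterate_bound (a K R : ℝ) :
    Summable fun n : ℕ => |a| * (K ^ 2) ^ n * R ^ (2 * n) / (2 * n)! :=
  ((Real.hasSum_cosh (K * R)).summable.mul_left |a|).congr fun n => by
    rw [mul_pow, pow_mul]; ring

lemma hasSum_codIterate (hK : ∀ u, |ω u| ≤ K ^ 2) (t : ℝ) :
    HasSum (fun n => codIterate ω a n t) (codSeries ω a t) :=
  (Summable.of_norm_bounded (summable_codIterate_bound a K |t|)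
    fun n => abs_codIterate_le hK n t).hasSum

lemma continuous_codSeries (hω : Continuous ω) (hK : ∀ u, |ω u| ≤ K ^ 2) :
    Continuous (codSeries ω a) := by
  refine continuous_iff_continuousAt.2 fun t => ?_
  have hOn : ContinuousOn (codSeries ω a) (Metric.ball 0 (|t| + 1)) :=
    continuousOn_tsum (fun n => (continuous_codIterate hω n).continuousOn)
      (summable_codIterate_bound a K (|t| + 1)) fun n u hu => by
        rw [mem_ball_zero_iff, Real.norm_eq_abs] at hu
        exact (abs_codIterate_le hK n u).trans (by gcongr)
  exact hOn.continuousAt (Metric.isOpen_ball.mem_nhds (by simp))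

lemma hasSum_integral_mul_codIterate (hω : Continuous ω) (hK : ∀ u, |ω u| ≤ K ^ 2) (τ : ℝ) :
    HasSum (fun n => ∫ u in (0 : ℝ)..τ, ω u * codIterate ω a n u)
      (∫ u in (0 : ℝ)..τ, ω u * codSeries ω a u) :=
  hasSum_integral_of_abs_le (fun n => hω.mul (continuous_codIterate hω n))
    ((summable_codIterate_bound a K |τ|).mul_right (K ^ 2)) (fun n u hu => by
      rw [abs_mul, mul_comm]
      exact mul_le_mul ((abs_codIterate_le hK n u).trans (by gcongr)) (hK u) (abs_nonneg _)
        (by positivity))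
    fun u => (hasSum_codIterate hK u).mul_left (ω u)

lemma codSeries_eq (hω : Continuous ω) (hK : ∀ u, |ω u| ≤ K ^ 2) (s : ℝ) :
    codSeries ω a s = a - ∫ τ in (0 : ℝ)..s, ∫ u in (0 : ℝ)..τ, ω u * codSeries ω a u := by
  have hsinh :
      Summable fun n : ℕ => |a| * (K ^ 2) ^ n * K ^ 2 * |s| ^ (2 * n + 1) / (2 * n + 1)! :=
    ((Real.hasSum_sinh (K * |s|)).summable.mul_left (|a| * K)).congr fun n => by
      rw [mul_pow, pow_succ, pow_mul]; ring
  have houter : HasSum (fun n => ∫ τ in (0 : ℝ)..s, ∫ u in (0 : ℝ)..τ, ω u * codIterate ω a n u)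
      (∫ τ in (0 : ℝ)..s, ∫ u in (0 : ℝ)..τ, ω u * codSeries ω a u) :=
    hasSum_integral_of_abs_le (fun n => continuous_primitive
      (fun _ _ => (hω.mul (continuous_codIterate hω n)).intervalIntegrable _ _) 0)
      hsinh (fun n τ hτ => (abs_integral_mul_le hK (abs_codIterate_le hK n) τ).trans (by gcongr))
      (hasSum_integral_mul_codIterate hω hK)
  have htail : HasSum (fun n => codIterate ω a (n + 1) s)
      (-∫ τ in (0 : ℝ)..s, ∫ u in (0 : ℝ)..τ, ω u * codSeries ω a u) :=
    houter.neg
  have hall := HasSum.zero_add (f := fun n => codIterate ω a n s) htail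
  rw [← sub_eq_add_neg] at hall
  exact (hasSum_codIterate hK s).unique hall

end COD

end

theorem stmt_4 (a : ℝ) (ω2 : ℝ → ℝ) (hω : Continuous ω2)
    (C : ℝ) (hC : ∀ s, |ω2 s| ≤ C)
    (f : ℕ → ℝ → ℝ)
    (hf0 : ∀ s, f 0 s = a)
    (hfS : ∀ n s, f (n + 1) s = -∫ τ in (0 : ℝ)..s, ∫ u in (0 : ℝ)..τ, ω2 u * f n u)
    (F : ℝ → ℝ) (hF : ∀ t, F t = ∑' n : ℕ, f n t) :
    (∀ t, DifferentiableAt ℝ F t) ∧ (∀ t, DifferentiableAt ℝ (deriv F) t) ∧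
      (∀ t, deriv (deriv F) t + ω2 t * F t = 0) ∧ F 0 = a ∧ deriv F 0 = 0 := by
  obtain rfl : f = codIterate ω2 a := by
    funext n
    induction n with
    | zero => exact funext hf0
    | succ n ih => funext s; rw [hfS, ih]; rfl
  obtain rfl : F = codSeries ω2 a := funext hF
  have hK (s : ℝ) : |ω2 s| ≤ √C ^ 2 := by
    rw [Real.sq_sqrt ((abs_nonneg _).trans (hC 0))]
    exact hC s
  have hFc := continuous_codSeries (a := a) hω hK
  have hF' := hasDerivAt_of_eq_sub_integral_integral hω hFc (codSeries_eq hω hK)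
  have hderiv : deriv (codSeries ω2 a) = fun t => -∫ u in (0 : ℝ)..t, ω2 u * codSeries ω2 a u :=
    funext fun t => (hF' t).deriv
  have hF'' (t : ℝ) : HasDerivAt (deriv (codSeries ω2 a)) (-(ω2 t * codSeries ω2 a t)) t :=
    hderiv ▸ ((hω.mul hFc).integral_hasStrictDerivAt 0 t).hasDerivAt.neg
  refine ⟨fun t => (hF' t).differentiableAt, fun t => (hF'' t).differentiableAt,
    fun t => by rw [(hF'' t).deriv, neg_add_cancel], ?_, by simp [hderiv]⟩
  rw [codSeries_eq hω hK 0, integral_same, sub_zero]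
end

section
/- For α > -1 and t > 0, the sum f(t) = 1 + ∑_{n=1}^∞ t^{n(α+2)} / ∏_{k=1}^n [(k(α+2) - 1)(k(α+2))] satisfies the upper bound f(t) < 1 + (t^{α+2} / ((α+1)(α+2))) · exp(2 t^{(α+2)/2} / (α+2)). -/
lemma fac_bound (n : ℕ) :
    ((2*n).factorial : ℝ) ≤ 4^n * n.factorial * (n+1).factorial := by
  induction n with
  | zero => norm_num
  | succ n ih =>
    have e : (2*(n+1)).factorial = (2*n+2)*((2*n+1)*(2*n).factorial) := by
      rw [show 2*(n+1) = 2*n+1+1 by ring, Nat.factorial_succ, Nat.factorial_succ]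
    have hf : ((n+1).factorial : ℝ) = ((n:ℝ)+1)*n.factorial := by
      push_cast [Nat.factorial_succ]; ring
    have ih' : ((2*n).factorial : ℝ) ≤ 4^n * n.factorial * (((n:ℝ)+1)*n.factorial) := by
      rw [← hf]; exact ih
    rw [e, Nat.factorial_succ (n+1), Nat.factorial_succ n]
    push_cast
    rw [pow_succ]
    have h2 : (0:ℝ) ≤ (2*(n:ℝ)+2)*(2*n+1) := by positivity
    have hco : (2*(n:ℝ)+2)*(2*n+1) ≤ 4*((n:ℝ)+1)*((n:ℝ)+2) := by nlinarith [Nat.cast_nonneg (α := ℝ) n]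
    have stepA := mul_le_mul_of_nonneg_left ih' h2
    have h3 := mul_le_mul_of_nonneg_right hco
      (show (0:ℝ) ≤ 4^n*(((n:ℝ)+1)*(n.factorial:ℝ)*(n.factorial:ℝ)) by positivity)
    nlinarith [stepA, h3]

lemma prod_lb (β : ℝ) (hβ : 1 < β) (n : ℕ) :
    (β-1) * β^(2*n+1) * n.factorial * (n+1).factorial ≤
      ∏ k ∈ Finset.Icc 1 (n+1), (((k:ℝ)*β-1) * ((k:ℝ)*β)) := by
  induction n with
  | zero => simp
  | succ n ih =>
    rw [Finset.prod_Icc_succ_top (by omega : 1 ≤ n+1+1)]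
    have hL0 : (0:ℝ) < (β-1) * β^(2*n+1) * n.factorial * (n+1).factorial := by
      have : (0:ℝ) < β - 1 := by linarith
      positivity
    have hP0 : (0:ℝ) < ∏ k ∈ Finset.Icc 1 (n+1), (((k:ℝ)*β-1) * ((k:ℝ)*β)) :=
      lt_of_lt_of_le hL0 ih
    have hterm : ((n:ℝ)+1)*β * (((n:ℝ)+2)*β) ≤ ((↑(n+1+1):ℝ)*β-1) * ((↑(n+1+1):ℝ)*β) := by
      push_cast
      have h1 : ((n:ℝ)+1)*β ≤ ((n:ℝ)+2)*β - 1 := by nlinarith [Nat.cast_nonneg (α := ℝ) n]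
      have h2 : (0:ℝ) ≤ ((n:ℝ)+2)*β := by nlinarith [Nat.cast_nonneg (α := ℝ) n]
      nlinarith
    have hterm0 : (0:ℝ) ≤ ((n:ℝ)+1)*β * (((n:ℝ)+2)*β) := by positivity
    calc (β-1) * β^(2*(n+1)+1) * (n+1).factorial * (n+1+1).factorial
        = ((β-1) * β^(2*n+1) * n.factorial * (n+1).factorial) *
            (((n:ℝ)+1)*β * (((n:ℝ)+2)*β)) := by
          rw [Nat.factorial_succ (n+1), Nat.factorial_succ n]
          push_cast
          ring
      _ ≤ (∏ k ∈ Finset.Icc 1 (n+1), (((k:ℝ)*β-1) * ((k:ℝ)*β))) *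
            (((↑(n+1+1):ℝ)*β-1) * ((↑(n+1+1):ℝ)*β)) :=
          mul_le_mul ih hterm hterm0 hP0.le

theorem stmt_8 (α : ℝ) (hα : -1 < α) (t : ℝ) (ht : 0 < t)
    (c : ℕ → ℝ)
    (hc : ∀ n, c n = ∏ k ∈ Finset.Icc 1 n, (((k : ℝ) * (α + 2) - 1) * ((k : ℝ) * (α + 2)))) :
    1 + ∑' n : ℕ, t ^ (((n : ℝ) + 1) * (α + 2)) / c (n + 1) <
      1 + t ^ (α + 2) / ((α + 1) * (α + 2)) *
        Real.exp (2 * t ^ ((α + 2) / 2) / (α + 2)) := by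
  have h1 : (0:ℝ) < α + 1 := by linarith
  have h2 : (0:ℝ) < α + 2 := by linarith
  have hβ : (1:ℝ) < α + 2 := by linarith
  have ht0 : (0:ℝ) ≤ t := ht.le
  set T : ℝ := t ^ ((α+2)/2) with hTdef
  have hT0 : 0 < T := Real.rpow_pos_of_pos ht _
  set x : ℝ := 2 * T / (α+2) with hxdef
  have hx0 : 0 < x := by positivity
  have hQ : (0:ℝ) < t ^ (α+2) := Real.rpow_pos_of_pos ht _
  set C : ℝ := t ^ (α+2) / ((α+1)*(α+2)) with hCdef
  have hC0 : 0 < C := by rw [hCdef]; positivity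
  set b : ℕ → ℝ := fun m => C * (x^m / m.factorial) with hbdef
  have hbpos : ∀ m, 0 < b m := fun m => by
    rw [hbdef]
    have := m.factorial_pos
    positivity
  have hbsum : Summable b := (Real.summable_pow_div_factorial x).mul_left C
  -- lower bounds on c
  have hclb : ∀ n : ℕ, (α+1) * (α+2)^(2*n+1) * n.factorial * (n+1).factorial ≤ c (n+1) := by
    intro n
    rw [hc]
    have := prod_lb (α+2) hβ n
    convert this using 2 <;> ring_nf
  have hcpos : ∀ n : ℕ, 0 < c (n+1) := by
    intro n
    refine lt_of_lt_of_le ?_ (hclb n)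
    positivity
  set a : ℕ → ℝ := fun n => t ^ (((n:ℝ) + 1) * (α + 2)) / c (n + 1) with hadef
  have hapos : ∀ n, 0 < a n := fun n => by
    rw [hadef]
    exact div_pos (Real.rpow_pos_of_pos ht _) (hcpos n)
  -- key termwise bound
  have key : ∀ n : ℕ, a n ≤ b (2*n) := by
    intro n
    have hTpow : T ^ (2*n) = t ^ ((n:ℝ) * (α+2)) := by
      rw [hTdef, ← Real.rpow_natCast (t ^ ((α+2)/2)) (2*n), ← Real.rpow_mul ht0]
      congr 1
      push_cast
      ring
    have hsplit : t ^ (((n:ℝ) + 1) * (α + 2)) = t ^ ((n:ℝ) * (α+2)) * t ^ (α+2) := by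
      rw [← Real.rpow_add ht]
      congr 1
      ring
    have hx2n : x ^ (2*n) = 4^n * T^(2*n) / (α+2)^(2*n) := by
      rw [hxdef, div_pow, mul_pow, show ((2:ℝ))^(2*n) = 4^n by rw [pow_mul]; norm_num]
    -- clean forms
    have hb2n : b (2*n) = t ^ ((n:ℝ) * (α+2)) * t ^ (α+2) * 4^n /
        ((α+1) * (α+2)^(2*n+1) * (2*n).factorial) := by
      rw [hbdef]
      simp only []
      rw [hx2n, hTpow, hCdef]
      have hf : (0:ℝ) < ((2*n).factorial : ℝ) := by exact_mod_cast (2*n).factorial_pos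
      field_simp
      ring
    rw [hadef]
    simp only []
    rw [hsplit, hb2n]
    set A : ℝ := t ^ ((n:ℝ) * (α+2)) * t ^ (α+2) with hAdef
    have hA0 : 0 < A := by rw [hAdef]; positivity
    have hD0 : (0:ℝ) < (α+1) * (α+2)^(2*n+1) * (2*n).factorial := by
      have : (0:ℝ) < ((2*n).factorial : ℝ) := by exact_mod_cast (2*n).factorial_pos
      positivity
    rw [div_le_div_iff₀ (hcpos n) hD0]
    have hmain : (α+1) * (α+2)^(2*n+1) * (2*n).factorial ≤ 4^n * c (n+1) := by
      calc (α+1) * (α+2)^(2*n+1) * ((2*n).factorial : ℝ)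
          ≤ (α+1) * (α+2)^(2*n+1) * (4^n * n.factorial * (n+1).factorial) := by
            refine mul_le_mul_of_nonneg_left (fac_bound n) ?_
            positivity
        _ = 4^n * ((α+1) * (α+2)^(2*n+1) * n.factorial * (n+1).factorial) := by ring
        _ ≤ 4^n * c (n+1) := by
            refine mul_le_mul_of_nonneg_left (hclb n) ?_
            positivity
    calc A * ((α+1) * (α+2)^(2*n+1) * (2*n).factorial)
        ≤ A * (4^n * c (n+1)) := mul_le_mul_of_nonneg_left hmain hA0.le
      _ = A * 4^n * c (n+1) := by ring
  -- summability
  have hinj2 : Function.Injective (fun n : ℕ => 2*n) := fun p q h => by dsimp only at h; omega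
  have hb2sum : Summable (fun n => b (2*n)) := hbsum.comp_injective hinj2
  have hasum : Summable a :=
    Summable.of_nonneg_of_le (fun n => (hapos n).le) key hb2sum
  have hinjodd : Function.Injective (fun n : ℕ => 2*n+1) := fun p q h => by dsimp only at h; omega
  have hboddsum : Summable (fun n => b (2*n+1)) := hbsum.comp_injective hinjodd
  have hoddpos : 0 < ∑' n, b (2*n+1) :=
    Summable.tsum_pos hboddsum (fun i => (hbpos _).le) 0 (hbpos 1)
  have hexp : ∑' m, b m = C * Real.exp x := by
    rw [hbdef, tsum_mul_left, Real.exp_eq_exp_ℝ, NormedSpace.exp_eq_tsum_div]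
  have hlt : ∑' n, a n < C * Real.exp x := by
    calc ∑' n, a n ≤ ∑' n, b (2*n) := Summable.tsum_le_tsum key hasum hb2sum
      _ < ∑' n, b (2*n) + ∑' n, b (2*n+1) := by linarith
      _ = ∑' m, b m := tsum_even_add_odd hb2sum hboddsum
      _ = C * Real.exp x := hexp
  have : ∑' n : ℕ, t ^ (((n : ℝ) + 1) * (α + 2)) / c (n + 1) = ∑' n, a n := by
    rw [hadef]
  linarith [hlt, this]
end

section
/- For n ≥ 1 and α > -1, the n-th coefficient of the series f(t) = 1 + ∑ t^{n(α+2)}/c_n, with c_n = ∏_{k=1}^n (k(α+2)-1)(k(α+2)), satisfies c_n ≥ (α+1)(α+2) · ((α+2)/2)^{2(n-1)} · ((n-1)!)², which implies each tail term is bounded by the corresponding term of (t^{α+2}/((α+1)(α+2))) · (∑_m (2 t^{(α+2)/2}/(α+2))^{m}/m!)². -/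
/-!
Write `a = α + 2 > 1`. Since `a ≥ 1`, the `k`-th factor `(k a - 1) k a` of `c_n` is at least
`((k - 1) a)² ≥ ((k - 1) a / 2)²` for `k ≥ 2`, while the first factor is `(a - 1) a`; multiplying gives
`c_n ≥ (a - 1) a (a / 2)^(2(n-1)) ((n-1)!)²`. Writing `t^(n a) = (t^(a/2))^(2n)`, the bound on
`t^(n a) / c_n` is this lower bound on `c_n` rearranged.
-/

open Finset

/-- The denominators `c_n = ∏_{k=1}^n (k a - 1) k a` of the series solution of `f'' = t^(a-2) f`. -/
noncomputable def codDenom (a : ℝ) (n : ℕ) : ℝ :=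
  ∏ k ∈ Icc 1 n, (((k : ℝ) * a - 1) * ((k : ℝ) * a))

lemma codDenom_one (a : ℝ) : codDenom a 1 = (a - 1) * a := by
  simp [codDenom]

lemma codDenom_succ (a : ℝ) (n : ℕ) :
    codDenom a (n + 1) = codDenom a n * ((((n : ℝ) + 1) * a - 1) * (((n : ℝ) + 1) * a)) := by
  rw [codDenom, codDenom, prod_Icc_succ_top (by omega)]
  push_cast
  rfl

lemma sq_half_mul_le_codDenom_factor {a k : ℝ} (ha : 1 ≤ a) (hk : 0 ≤ k) :
    (a / 2 * k) ^ 2 ≤ ((k + 1) * a - 1) * ((k + 1) * a) := by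
  have hka : 0 ≤ k * a := by positivity
  have hfirst : k * a ≤ (k + 1) * a - 1 := by linarith
  have hsecond : k * a ≤ (k + 1) * a := by linarith
  calc (a / 2 * k) ^ 2 ≤ (k * a) * (k * a) := by nlinarith
    _ ≤ ((k + 1) * a - 1) * ((k + 1) * a) := mul_le_mul hfirst hsecond hka (hka.trans hfirst)

lemma codDenom_lower_bound {a : ℝ} (ha : 1 ≤ a) (m : ℕ) :
    (a - 1) * a * (a / 2) ^ (2 * m) * (m.factorial : ℝ) ^ 2 ≤ codDenom a (m + 1) := by
  induction m with
  | zero => simp [codDenom_one]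
  | succ m ih =>
    have hbound_nonneg : 0 ≤ (a - 1) * a * (a / 2) ^ (2 * m) * (m.factorial : ℝ) ^ 2 := by
      have : 0 ≤ a - 1 := by linarith
      positivity
    calc (a - 1) * a * (a / 2) ^ (2 * (m + 1)) * ((m + 1).factorial : ℝ) ^ 2
        = ((a - 1) * a * (a / 2) ^ (2 * m) * (m.factorial : ℝ) ^ 2) *
            (a / 2 * ((m + 1 : ℕ) : ℝ)) ^ 2 := by
          rw [Nat.factorial_succ, Nat.cast_mul]
          ring
      _ ≤ codDenom a (m + 1) *
            (((((m + 1 : ℕ) : ℝ) + 1) * a - 1) * ((((m + 1 : ℕ) : ℝ) + 1) * a)) :=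
          mul_le_mul ih (sq_half_mul_le_codDenom_factor ha (Nat.cast_nonneg _)) (sq_nonneg _)
            (hbound_nonneg.trans ih)
      _ = codDenom a (m + 1 + 1) := (codDenom_succ a (m + 1)).symm

lemma majorant_term_eq_rpow_div {a t : ℝ} (ht : 0 ≤ t) (m : ℕ) :
    t ^ a / ((a - 1) * a) * ((2 * t ^ (a / 2) / a) ^ m / (m.factorial : ℝ)) ^ 2 =
      t ^ (((m + 1 : ℕ) : ℝ) * a) / ((a - 1) * a * (a / 2) ^ (2 * m) * (m.factorial : ℝ) ^ 2) := by
  have hpow (k : ℕ) : t ^ ((k : ℝ) * a) = (t ^ (a / 2)) ^ (2 * k) := by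
    rw [← Real.rpow_natCast, ← Real.rpow_mul ht]
    push_cast
    ring_nf
  have hsq : t ^ a = (t ^ (a / 2)) ^ 2 := by simpa using hpow 1
  have hhalf : 2 * t ^ (a / 2) / a = t ^ (a / 2) / (a / 2) := by ring
  rw [hsq, hpow, hhalf, div_pow (t ^ (a / 2)), div_div, div_pow, div_mul_div_comm]
  congr 1 <;> ring

theorem stmt_9 (α : ℝ) (hα : -1 < α)
    (c : ℕ → ℝ)
    (hc : ∀ n, c n = ∏ k ∈ Finset.Icc 1 n, (((k : ℝ) * (α + 2) - 1) * ((k : ℝ) * (α + 2)))) :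
    ∀ n : ℕ, 1 ≤ n →
      ((α + 1) * (α + 2) * ((α + 2) / 2) ^ (2 * (n - 1)) *
          ((Nat.factorial (n - 1) : ℝ)) ^ 2 ≤ c n) ∧
        ∀ t : ℝ, 0 ≤ t →
          t ^ ((n : ℝ) * (α + 2)) / c n ≤
            t ^ (α + 2) / ((α + 1) * (α + 2)) *
              ((2 * t ^ ((α + 2) / 2) / (α + 2)) ^ (n - 1) /
                (Nat.factorial (n - 1) : ℝ)) ^ 2 := by
  obtain rfl : c = codDenom (α + 2) := funext hc
  have ha : 1 < α + 2 := by linarith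
  have hsub : α + 2 - 1 = α + 1 := by ring
  intro n hn
  obtain ⟨m, rfl⟩ : ∃ m, n = m + 1 := ⟨n - 1, by omega⟩
  rw [Nat.add_sub_cancel]
  have hlower := codDenom_lower_bound ha.le m
  rw [hsub] at hlower
  refine ⟨hlower, fun t ht => ?_⟩
  have hpos : 0 < (α + 1) * (α + 2) * ((α + 2) / 2) ^ (2 * m) * (m.factorial : ℝ) ^ 2 := by
    have : 0 < α + 1 := by linarith
    positivity
  rw [← hsub, majorant_term_eq_rpow_div ht, hsub]
  exact div_le_div_of_nonneg_left (by positivity) hpos hlower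
end

section
/- The function ψ_p(x) = e^{imx} [1 + ∑_{n=1}^∞ Aⁿ e^{nx} ∏_{k=1}^n 1/(k² + 2imk)] is twice differentiable on ℝ and satisfies ψ_p''(x) + m² ψ_p(x) - A e^x ψ_p(x) = 0 for all x. -/
/-!
Factor ψ(x) = e^{imx} f(x) with f(x) = ∑ cₙ e^{nx}. The gauge factor turns the equation into
f'' + 2im f' = A eˣ f, and on the exponential series this is the coefficient recurrence
cₙ₊₁ ((n+1)² + 2im(n+1)) = A cₙ, which the product formula for cₙ satisfies by construction.
The denominators grow quadratically, so ∑ ‖cₙ‖ e^{nR} converges for every R and the series may be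
differentiated termwise on every half-line (-∞, R).
-/

open Complex

section ExpSeries

variable {c : ℕ → ℂ}

lemma norm_mul_ofReal_exp (z : ℂ) (x : ℝ) : ‖z * (Real.exp x : ℂ)‖ = ‖z‖ * Real.exp x := by
  rw [norm_mul, norm_real, Real.norm_of_nonneg (Real.exp_pos x).le]

lemma summable_norm_mul_exp_of_norm_succ_le {K : ℝ}
    (h : ∀ n : ℕ, ‖c (n + 1)‖ ≤ K / (n + 1) * ‖c n‖) (R : ℝ) :
    Summable fun n : ℕ => ‖c n‖ * Real.exp (n * R) := by
  refine summable_of_ratio_norm_eventually_le (r := 1 / 2) (by norm_num) ?_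
  obtain ⟨N, hN⟩ := exists_nat_ge (2 * K * Real.exp R)
  filter_upwards [Filter.eventually_ge_atTop N] with n hn
  have hn1 : (0 : ℝ) < n + 1 := by positivity
  have hK : K / (n + 1) * Real.exp R ≤ 1 / 2 := by
    rw [div_mul_eq_mul_div, div_le_iff₀ hn1]
    have : (N : ℝ) ≤ n := by exact_mod_cast hn
    linarith
  simp only [norm_mul, Real.norm_of_nonneg (Real.exp_pos _).le, norm_norm]
  calc ‖c (n + 1)‖ * Real.exp ((n + 1 : ℕ) * R)
      ≤ K / (n + 1) * ‖c n‖ * Real.exp ((n + 1 : ℕ) * R) := by gcongr; exact h n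
    _ = K / (n + 1) * Real.exp R * (‖c n‖ * Real.exp (n * R)) := by
        rw [show ((n + 1 : ℕ) : ℝ) * R = n * R + R by push_cast; ring, Real.exp_add]; ring
    _ ≤ 1 / 2 * (‖c n‖ * Real.exp (n * R)) := by gcongr

variable (hc : ∀ R : ℝ, Summable fun n : ℕ => ‖c n‖ * Real.exp (n * R))
include hc

lemma summable_mul_ofReal_exp (x : ℝ) : Summable fun n : ℕ => c n * (Real.exp (n * x) : ℂ) :=
  .of_norm <| by simpa only [norm_mul_ofReal_exp] using hc x

lemma summable_norm_natCast_mul_mul_exp (R : ℝ) :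
    Summable fun n : ℕ => ‖(n : ℂ) * c n‖ * Real.exp (n * R) := by
  refine .of_nonneg_of_le (fun n => by positivity) (fun n => ?_) (hc (R + 1))
  calc ‖(n : ℂ) * c n‖ * Real.exp (n * R) = ‖c n‖ * (n * Real.exp (n * R)) := by
        rw [norm_mul, norm_natCast]; ring
    _ ≤ ‖c n‖ * (Real.exp n * Real.exp (n * R)) := by
        gcongr; linarith [Real.add_one_le_exp (n : ℝ)]
    _ = ‖c n‖ * Real.exp (n * (R + 1)) := by rw [← Real.exp_add]; ring_nf

lemma hasDerivAt_tsum_mul_ofReal_exp (x : ℝ) :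
    HasDerivAt (fun y : ℝ => ∑' n : ℕ, c n * (Real.exp (n * y) : ℂ))
      (∑' n : ℕ, (n : ℂ) * c n * (Real.exp (n * x) : ℂ)) x := by
  have hterm (n : ℕ) (y : ℝ) : HasDerivAt (fun y : ℝ => c n * (Real.exp (n * y) : ℂ))
      ((n : ℂ) * c n * (Real.exp (n * y) : ℂ)) y :=
    ((((hasDerivAt_id' y).const_mul (n : ℝ)).exp.ofReal_comp).const_mul (c n)).congr_deriv
      (by push_cast; ring)
  refine hasDerivAt_tsum_of_isPreconnected (summable_norm_natCast_mul_mul_exp hc (x + 1))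
    isOpen_Iio isPreconnected_Iio (fun n y _ => hterm n y) (fun n y hy => ?_) (lt_add_one x)
    (summable_mul_ofReal_exp hc x) (lt_add_one x)
  rw [norm_mul_ofReal_exp]
  gcongr
  exact le_of_lt hy

/-- By `hasDerivAt_tsum_mul_ofReal_exp` the left side is `f'' + a f'` for `f x = ∑ cₙ e^{nx}`. -/
lemma tsum_mul_ofReal_exp_ode {a b : ℂ}
    (hrec : ∀ n : ℕ, c (n + 1) * (((n + 1 : ℕ) : ℂ) ^ 2 + a * (n + 1 : ℕ)) = b * c n) (x : ℝ) :
    ∑' n : ℕ, (n : ℂ) * ((n : ℂ) * c n) * (Real.exp (n * x) : ℂ) +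
        a * ∑' n : ℕ, (n : ℂ) * c n * (Real.exp (n * x) : ℂ) =
      b * (Real.exp x : ℂ) * ∑' n : ℕ, c n * (Real.exp (n * x) : ℂ) := by
  have hc' := summable_norm_natCast_mul_mul_exp hc
  have hs2 := summable_mul_ofReal_exp (summable_norm_natCast_mul_mul_exp hc') x
  have hs1 := (summable_mul_ofReal_exp hc' x).mul_left a
  have hsum : Summable fun n : ℕ => ((n : ℂ) ^ 2 + a * n) * c n * (Real.exp (n * x) : ℂ) :=
    (hs2.add hs1).congr fun n => by ring
  calc _ = ∑' n : ℕ, ((n : ℂ) ^ 2 + a * n) * c n * (Real.exp (n * x) : ℂ) := by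
        rw [← tsum_mul_left, ← hs2.tsum_add hs1]
        exact tsum_congr fun n => by ring
    _ = ∑' n : ℕ, (((n + 1 : ℕ) : ℂ) ^ 2 + a * (n + 1 : ℕ)) * c (n + 1) *
          (Real.exp ((n + 1 : ℕ) * x) : ℂ) := by
        rw [hsum.tsum_eq_zero_add]; simp
    _ = ∑' n : ℕ, b * (Real.exp x : ℂ) * (c n * (Real.exp (n * x) : ℂ)) := by
        refine tsum_congr fun n => ?_
        rw [mul_comm _ (c _), hrec, show ((n + 1 : ℕ) : ℝ) * x = x + n * x by push_cast; ring,
          Real.exp_add, ofReal_mul]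
        ring
    _ = _ := tsum_mul_left

end ExpSeries

lemma hasDerivAt_cexp_mul {f : ℝ → ℂ} {f' : ℂ} (μ : ℂ) {x : ℝ} (hf : HasDerivAt f f' x) :
    HasDerivAt (fun y : ℝ => exp (μ * y) * f y) (exp (μ * x) * (f' + μ * f x)) x := by
  have hexp : HasDerivAt (fun y : ℝ => exp (μ * y)) (exp (μ * x) * μ) x := by
    simpa using ((hasDerivAt_id (x : ℂ)).const_mul μ).cexp.comp_ofReal
  exact (hexp.fun_mul hf).congr_deriv (by ring)

/-- The coefficients of the COD series, Eq. (20), are `codCoeff (2 * I * m) A`. -/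
noncomputable def codCoeff (a b : ℂ) (n : ℕ) : ℂ :=
  b ^ n * ∏ k ∈ Finset.Icc 1 n, ((k : ℂ) ^ 2 + a * k)⁻¹

section codCoeff

variable {a : ℂ} (ha : 0 ≤ a.re)
include ha

lemma sq_le_norm_sq_add_mul (k : ℕ) : (k : ℝ) ^ 2 ≤ ‖(k : ℂ) ^ 2 + a * k‖ := by
  have hre : ((k : ℂ) ^ 2 + a * k).re = k ^ 2 + a.re * k := by simp [sq]
  calc (k : ℝ) ^ 2 ≤ k ^ 2 + a.re * k := by nlinarith [(k.cast_nonneg : (0 : ℝ) ≤ k)]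
    _ ≤ ‖(k : ℂ) ^ 2 + a * k‖ := hre ▸ (le_abs_self _).trans (abs_re_le_norm _)

lemma codCoeff_succ_mul (b : ℂ) (n : ℕ) :
    codCoeff a b (n + 1) * (((n + 1 : ℕ) : ℂ) ^ 2 + a * (n + 1 : ℕ)) = b * codCoeff a b n := by
  have hne : ((n + 1 : ℕ) : ℂ) ^ 2 + a * (n + 1 : ℕ) ≠ 0 := by
    refine norm_pos_iff.mp (lt_of_lt_of_le ?_ (sq_le_norm_sq_add_mul ha (n + 1)))
    positivity
  rw [codCoeff, codCoeff, Finset.prod_Icc_succ_top (by omega), pow_succ]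
  simp only [mul_assoc, inv_mul_cancel₀ hne, mul_one]
  ring

lemma norm_codCoeff_succ_le (b : ℂ) (n : ℕ) :
    ‖codCoeff a b (n + 1)‖ ≤ ‖b‖ / (n + 1) * ‖codCoeff a b n‖ := by
  have hD := sq_le_norm_sq_add_mul ha (n + 1)
  have hpos : (0 : ℝ) < ((n + 1 : ℕ) : ℝ) ^ 2 := by positivity
  have h := congrArg norm (codCoeff_succ_mul ha b n)
  rw [norm_mul, norm_mul] at h
  rw [div_mul_eq_mul_div, le_div_iff₀ (by positivity), ← h]
  push_cast at hD ⊢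
  have : (n : ℝ) + 1 ≤ ((n : ℝ) + 1) ^ 2 := by nlinarith
  nlinarith [norm_nonneg (codCoeff a b (n + 1))]

lemma summable_norm_codCoeff_mul_exp (b : ℂ) (R : ℝ) :
    Summable fun n : ℕ => ‖codCoeff a b n‖ * Real.exp (n * R) :=
  summable_norm_mul_exp_of_norm_succ_le (norm_codCoeff_succ_le ha b) R

lemma one_add_tsum_eq_tsum_codCoeff_mul_exp (b : ℂ) (x : ℝ) :
    1 + ∑' n : ℕ, b ^ (n + 1) * (Real.exp ((n + 1) * x) : ℂ) *
        ∏ k ∈ Finset.Icc 1 (n + 1), ((k : ℂ) ^ 2 + a * k)⁻¹ =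
      ∑' n : ℕ, codCoeff a b n * (Real.exp (n * x) : ℂ) := by
  rw [(summable_mul_ofReal_exp (summable_norm_codCoeff_mul_exp ha b) x).tsum_eq_zero_add]
  congr 1
  · simp [codCoeff]
  · exact tsum_congr fun n => by rw [codCoeff]; push_cast; ring

end codCoeff

theorem stmt_12_general (m A : ℝ)
    (ψ : ℝ → ℂ)
    (hψ : ∀ x : ℝ, ψ x = Complex.exp (I * m * x) *
      (1 + ∑' n : ℕ, (A : ℂ) ^ (n + 1) * (Real.exp ((n + 1) * x) : ℂ) *
        ∏ k ∈ Finset.Icc 1 (n + 1), ((k : ℂ) ^ 2 + 2 * I * m * k)⁻¹)) :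
    (∀ x, DifferentiableAt ℝ ψ x) ∧ (∀ x, DifferentiableAt ℝ (deriv ψ) x) ∧
      ∀ x, deriv (deriv ψ) x + (m : ℂ) ^ 2 * ψ x - (A : ℂ) * (Real.exp x : ℂ) * ψ x = 0 := by
  have ha : 0 ≤ (2 * I * m).re := by simp
  set c := codCoeff (2 * I * m) A
  have hc : ∀ R : ℝ, Summable fun n : ℕ => ‖c n‖ * Real.exp (n * R) :=
    summable_norm_codCoeff_mul_exp ha A
  set f := fun y : ℝ => ∑' n : ℕ, c n * (Real.exp (n * y) : ℂ)
  set f' := fun y : ℝ => ∑' n : ℕ, (n : ℂ) * c n * (Real.exp (n * y) : ℂ)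
  have hf (x : ℝ) : HasDerivAt f (f' x) x := hasDerivAt_tsum_mul_ofReal_exp hc x
  have hf' (x : ℝ) := hasDerivAt_tsum_mul_ofReal_exp (summable_norm_natCast_mul_mul_exp hc) x
  have hψf : ψ = fun y : ℝ => exp (I * m * y) * f y :=
    funext fun y => (hψ y).trans (by rw [one_add_tsum_eq_tsum_codCoeff_mul_exp ha])
  have hψ' (x : ℝ) : HasDerivAt ψ (exp (I * m * x) * (f' x + I * m * f x)) x :=
    hψf ▸ hasDerivAt_cexp_mul _ (hf x)
  have hdψ : deriv ψ = fun y : ℝ => exp (I * m * y) * (f' y + I * m * f y) :=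
    funext fun y => (hψ' y).deriv
  have hψ'' (x : ℝ) :=
    hdψ ▸ hasDerivAt_cexp_mul (I * m) ((hf' x).fun_add ((hf x).const_mul (I * m)))
  refine ⟨fun x => (hψ' x).differentiableAt, fun x => (hψ'' x).differentiableAt, fun x => ?_⟩
  have hode := tsum_mul_ofReal_exp_ode hc (codCoeff_succ_mul ha A) x
  rw [(hψ'' x).deriv, hψf]
  linear_combination exp (I * m * x) * hode + m ^ 2 * exp (I * m * x) * f x * I_sq

theorem stmt_12 (m A : ℝ) (hm : m ≠ 0)
    (ψ : ℝ → ℂ)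
    (hψ : ∀ x : ℝ, ψ x = Complex.exp (I * m * x) *
      (1 + ∑' n : ℕ, (A : ℂ) ^ (n + 1) * (Real.exp ((n + 1) * x) : ℂ) *
        ∏ k ∈ Finset.Icc 1 (n + 1), ((k : ℂ) ^ 2 + 2 * I * m * k)⁻¹)) :
    (∀ x, DifferentiableAt ℝ ψ x) ∧ (∀ x, DifferentiableAt ℝ (deriv ψ) x) ∧
      ∀ x, deriv (deriv ψ) x + (m : ℂ) ^ 2 * ψ x - (A : ℂ) * (Real.exp x : ℂ) * ψ x = 0 :=
  stmt_12_general m A ψ hψ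
end
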